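/- For the Plebański–Demiański metric with aL_z = (a² − 2alC + l²)E, the quantities g̃^{0j}p_j and g̃^{3j}p_j (with g̃^{ij} = R^{ij}(r) + Θ^{ij}(θ)) evaluated at r = 0, cosθ = −l/a satisfy: g̃^{0j}p_j = −(a² − 2alC + l²)·Q²·((a²−2alC+l²)E − aL_z)/((a²−l²)(a²+Q²−l²)) = 0 and g̃^{3j}p_j = 0; moreover ∂_r(g̃^{0j}p_j)|_q = (a²−2alC+l²)·2m((a²−2alC+l²)E − aL_z)/((a²+Q²−l²)²) = 0 and ∂_θ(g̃^{0j}p_j)|_q = 0, and similarly for the i = 3 components. -/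

import Mathlib

/-!
Under the constraint `a L_z = (a² − 2alC + l²) E` both quantities separate as
`A(r) · r² + B(θ) · (l + a cos θ)²` with `A` smooth near `r = 0` (as long as `Δ_r(0) ≠ 0`) and
`B` smooth near `θ₀` (as long as `sin θ₀ ≠ 0`). At `r = 0`, `cos θ₀ = −l/a` both squared factors
vanish, so each quantity vanishes there together with its first `r`- and `θ`-derivatives.
-/

/-- `g̃^{0j} pⱼ = (R^{00} + Θ^{00})(−E) + (R^{03} + Θ^{03}) L_z` for the
Plebański–Demiański metric. -/
noncomputable def PDG0 (m a l C Q E Lz r θ : ℝ) : ℝ :=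
  (-((r ^ 2 + a ^ 2 + l ^ 2 - 2 * a * l * C) ^ 2) /
        (r ^ 2 - 2 * m * r + a ^ 2 - l ^ 2 + Q ^ 2)
      + (a * Real.sin θ ^ 2 - 2 * l * (Real.cos θ + C)) ^ 2 / Real.sin θ ^ 2) *
      (-E) +
    (-(a * (r ^ 2 + a ^ 2 + l ^ 2 - 2 * a * l * C)) /
        (r ^ 2 - 2 * m * r + a ^ 2 - l ^ 2 + Q ^ 2)
      + (a * Real.sin θ ^ 2 - 2 * l * (Real.cos θ + C)) / Real.sin θ ^ 2) * Lz

/-- `g̃^{3j} pⱼ = (R^{03} + Θ^{03})(−E) + (R^{33} + Θ^{33}) L_z` for the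
Plebański–Demiański metric. -/
noncomputable def PDG3 (m a l C Q E Lz r θ : ℝ) : ℝ :=
  (-(a * (r ^ 2 + a ^ 2 + l ^ 2 - 2 * a * l * C)) /
        (r ^ 2 - 2 * m * r + a ^ 2 - l ^ 2 + Q ^ 2)
      + (a * Real.sin θ ^ 2 - 2 * l * (Real.cos θ + C)) / Real.sin θ ^ 2) *
      (-E) +
    (-(a ^ 2) / (r ^ 2 - 2 * m * r + a ^ 2 - l ^ 2 + Q ^ 2)
      + 1 / Real.sin θ ^ 2) * Lz

open Real

theorem hasDerivAt_mul_sq_of_eq_zero {𝕜 : Type*} [NontriviallyNormedField 𝕜] {f u : 𝕜 → 𝕜}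
    {x : 𝕜} (hf : DifferentiableAt 𝕜 f x) (hu : DifferentiableAt 𝕜 u x) (hux : u x = 0) :
    HasDerivAt (fun y => f y * u y ^ 2) 0 x := by
  simpa [hux] using hf.hasDerivAt.fun_mul (hu.hasDerivAt.fun_pow 2)

section Separation

variable {m a l C Q E Lz : ℝ}

/-- With `K = a² − 2alC + l²` and `χ = a sin²θ − 2l(cos θ + C)` one has `K − aχ = (l + a cos θ)²`;
this is what makes the angular part factor. -/
theorem Lz_sub_mul_chi (ha : a ≠ 0) (hE : a * Lz = (a ^ 2 - 2 * a * l * C + l ^ 2) * E)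
    (θ : ℝ) :
    Lz - E * (a * sin θ ^ 2 - 2 * l * (cos θ + C)) = E / a * (l + a * cos θ) ^ 2 := by
  field_simp
  linear_combination hE - a ^ 2 * E * sin_sq_add_cos_sq θ

-- No side conditions are needed: both sides are polynomials in `Δ_r⁻¹` and `(sin²θ)⁻¹`.
theorem PDG0_eq_of_constraint (ha : a ≠ 0) (hE : a * Lz = (a ^ 2 - 2 * a * l * C + l ^ 2) * E)
    (r θ : ℝ) :
    PDG0 m a l C Q E Lz r θ =
      E * (r ^ 2 + a ^ 2 + l ^ 2 - 2 * a * l * C) / (r ^ 2 - 2 * m * r + a ^ 2 - l ^ 2 + Q ^ 2)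
          * r ^ 2 +
        E / a * (a * sin θ ^ 2 - 2 * l * (cos θ + C)) / sin θ ^ 2 * (l + a * cos θ) ^ 2 := by
  unfold PDG0
  linear_combination
    (-(r ^ 2 + a ^ 2 + l ^ 2 - 2 * a * l * C) / (r ^ 2 - 2 * m * r + a ^ 2 - l ^ 2 + Q ^ 2)) * hE +
      (a * sin θ ^ 2 - 2 * l * (cos θ + C)) / sin θ ^ 2 * Lz_sub_mul_chi ha hE θ

theorem PDG3_eq_of_constraint (ha : a ≠ 0) (hE : a * Lz = (a ^ 2 - 2 * a * l * C + l ^ 2) * E)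
    (r θ : ℝ) :
    PDG3 m a l C Q E Lz r θ =
      a * E / (r ^ 2 - 2 * m * r + a ^ 2 - l ^ 2 + Q ^ 2) * r ^ 2 +
        E / a / sin θ ^ 2 * (l + a * cos θ) ^ 2 := by
  unfold PDG3
  linear_combination
    (-a / (r ^ 2 - 2 * m * r + a ^ 2 - l ^ 2 + Q ^ 2)) * hE +
      1 / sin θ ^ 2 * Lz_sub_mul_chi ha hE θ

end Separation

/-- Equation (33): under the constraint `a L_z = (a² − 2alC + l²) E`, the
quantities `g̃^{ij} pⱼ` and their first `r`- and `θ`-derivatives all vanish at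
the ring singularity `r = 0`, `cos θ = −l/a`, verifying condition ii of
Theorem 2 for the principal null rays. -/
theorem PD_condition_ii (m a l C Q E Lz θ₀ : ℝ)
    (ha : l ^ 2 < a ^ 2) (hQ : 0 < a ^ 2 + Q ^ 2 - l ^ 2)
    (hθ : Real.cos θ₀ = -l / a)
    (hE : a * Lz = (a ^ 2 - 2 * a * l * C + l ^ 2) * E) :
    PDG0 m a l C Q E Lz 0 θ₀ = 0 ∧
    PDG3 m a l C Q E Lz 0 θ₀ = 0 ∧
    deriv (fun r => PDG0 m a l C Q E Lz r θ₀) 0 = 0 ∧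
    deriv (fun θ => PDG0 m a l C Q E Lz 0 θ) θ₀ = 0 ∧
    deriv (fun r => PDG3 m a l C Q E Lz r θ₀) 0 = 0 ∧
    deriv (fun θ => PDG3 m a l C Q E Lz 0 θ) θ₀ = 0 := by
  have ha0 : a ≠ 0 := by rintro rfl; nlinarith [sq_nonneg l]
  have hΔ : (0 : ℝ) ^ 2 - 2 * m * 0 + a ^ 2 - l ^ 2 + Q ^ 2 ≠ 0 := by nlinarith
  have hsin : sin θ₀ ^ 2 ≠ 0 := by
    rw [sin_sq, hθ, div_pow, neg_sq, one_sub_div (pow_ne_zero 2 ha0)]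
    exact div_ne_zero (by linarith) (pow_ne_zero 2 ha0)
  have hcos : l + a * cos θ₀ = 0 := by rw [hθ]; field_simp; ring
  simp only [PDG0_eq_of_constraint ha0 hE, PDG3_eq_of_constraint ha0 hE]
  refine ⟨by simp [hcos], by simp [hcos], ?_, ?_, ?_, ?_⟩
  · refine ((hasDerivAt_mul_sq_of_eq_zero (u := fun r => r) ?_ differentiableAt_id rfl).add_const
      _).deriv
    exact .div (by fun_prop) (by fun_prop) hΔ
  · refine ((hasDerivAt_mul_sq_of_eq_zero (u := fun θ => l + a * cos θ) ?_
      (by fun_prop) hcos).const_add _).deriv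
    exact .div (by fun_prop) (by fun_prop) hsin
  · refine ((hasDerivAt_mul_sq_of_eq_zero (u := fun r => r) ?_ differentiableAt_id rfl).add_const
      _).deriv
    exact .div (by fun_prop) (by fun_prop) hΔ
  · refine ((hasDerivAt_mul_sq_of_eq_zero (u := fun θ => l + a * cos θ) ?_
      (by fun_prop) hcos).const_add _).deriv
    exact .div (by fun_prop) (by fun_prop) hsin
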